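/- Let f: ℝ → ℂ be a continuous 2π-periodic function that is real-analytic except at finitely many points, near each of which f(θ) = a(θ) + |θ - θ_s|^{1/2} b(θ) with a, b real-analytic. Then the Fourier coefficients c_k = (1/2π)∫₀^{2π} f(θ)e^{-ikθ}dθ satisfy c_k = O(|k|^{-3/2}) as |k| → ∞. -/

import Mathlib

/-!
Write `Δ²ₕ f(θ) = f(θ + h) + f(θ - h) - 2 f(θ)`. For `h = π / k` the character `e^{-ikθ}` changes
sign under `θ ↦ θ ± h`, so periodicity gives `∫₀^{2π} Δ²ₕ f · e^{-ikθ} = -4 ∫₀^{2π} f · e^{-ikθ}`,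
and it suffices to show `∫₀^{2π} ‖Δ²ₕ f‖ = O(h^{3/2})`.

Near a point where `f = a + √|θ - s| • b`, the product rule for second differences bounds
`‖Δ²ₕ f‖` by `O(h^{3/2})` (Taylor for `a` and `b`, `1/2`-Hölder continuity of `√|·|`) plus
`‖b‖ · |Δ²ₕ √|·|(θ - s)|`. By scaling, `Δ²ₕ √|·|(x) = h^{1/2} Δ²₁ √|·|(x / h)`, so the integral of
the latter over `ℝ` is `h^{3/2}` times that of `Δ²₁ √|·|`, which is finite because
`Δ²₁ √|·|(x) = O(|x|^{-3/2})`. Compactness of `[0, 2π]` makes all constants uniform.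
-/

open Real Metric intervalIntegral
open Set Filter Topology MeasureTheory

def secondDiff {E : Type*} [AddCommGroup E] (f : ℝ → E) (h θ : ℝ) : E :=
  f (θ + h) + f (θ - h) - 2 • f θ

section SecondDiff

variable {E : Type*} [AddCommGroup E]

theorem secondDiff_neg (f : ℝ → E) (h θ : ℝ) : secondDiff f (-h) θ = secondDiff f h θ := by
  simp only [secondDiff, ← sub_eq_add_neg, sub_neg_eq_add]
  abel

theorem secondDiff_abs (f : ℝ → E) (h θ : ℝ) : secondDiff f |h| θ = secondDiff f h θ := by
  rcases abs_choice h with hh | hh <;> simp only [hh, secondDiff_neg]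

theorem secondDiff_add (f g : ℝ → E) (h θ : ℝ) :
    secondDiff (fun y => f y + g y) h θ = secondDiff f h θ + secondDiff g h θ := by
  simp only [secondDiff, smul_add]
  abel

variable [Module ℝ E]

theorem secondDiff_smul (φ : ℝ → ℝ) (b : ℝ → E) (h θ : ℝ) :
    secondDiff (fun y => φ y • b y) h θ =
      secondDiff φ h θ • b θ + (φ (θ + h) - φ θ) • (b (θ + h) - b θ) +
        (φ (θ - h) - φ θ) • (b (θ - h) - b θ) + φ θ • secondDiff b h θ := by
  simp only [secondDiff]
  module

end SecondDiff

theorem Continuous.secondDiff {E : Type*} [NormedAddCommGroup E] {f : ℝ → E} (hf : Continuous f)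
    (h : ℝ) : Continuous (secondDiff f h) := by
  unfold _root_.secondDiff
  fun_prop

theorem norm_secondDiff_le {E : Type*} [NormedAddCommGroup E] [NormedSpace ℝ E]
    {g g' g'' : ℝ → E} {θ h M : ℝ} (hh : 0 ≤ h)
    (hg : ∀ y ∈ Icc (θ - h) (θ + h), HasDerivAt g (g' y) y)
    (hg' : ∀ y ∈ Icc (θ - h) (θ + h), HasDerivAt g' (g'' y) y)
    (hM : ∀ y ∈ Icc (θ - h) (θ + h), ‖g'' y‖ ≤ M) :
    ‖secondDiff g h θ‖ ≤ 2 * M * h ^ 2 := by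
  have hplus : ∀ t ∈ Icc 0 h, θ + t ∈ Icc (θ - h) (θ + h) := fun t ht =>
    ⟨by linarith [ht.1], by linarith [ht.2]⟩
  have hminus : ∀ t ∈ Icc 0 h, θ - t ∈ Icc (θ - h) (θ + h) := fun t ht =>
    ⟨by linarith [ht.2], by linarith [ht.1]⟩
  have hderiv : ∀ t ∈ Icc 0 h, HasDerivWithinAt (fun t => g (θ + t) + g (θ - t))
      (g' (θ + t) - g' (θ - t)) (Icc 0 h) t := fun t ht =>
    (((hg _ (hplus t ht)).comp_const_add θ t).add
      ((hg _ (hminus t ht)).comp_const_sub θ t)).hasDerivWithinAt.congr_deriv (by abel)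
  have hbound : ∀ t ∈ Icc 0 h, ‖g' (θ + t) - g' (θ - t)‖ ≤ 2 * M * h := by
    intro t ht
    calc ‖g' (θ + t) - g' (θ - t)‖ ≤ M * ‖(θ + t) - (θ - t)‖ :=
          (convex_Icc _ _).norm_image_sub_le_of_norm_hasDerivWithin_le
            (fun y hy => (hg' y hy).hasDerivWithinAt) hM (hminus t ht) (hplus t ht)
      _ ≤ 2 * M * h := by
          rw [Real.norm_eq_abs, abs_of_nonneg (by linarith [ht.1])]
          nlinarith [(norm_nonneg _).trans (hM θ ⟨by linarith, by linarith⟩), ht.2]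
  have := (convex_Icc 0 h).norm_image_sub_le_of_norm_hasDerivWithin_le hderiv hbound
    (left_mem_Icc.2 hh) (right_mem_Icc.2 hh)
  calc ‖secondDiff g h θ‖ = ‖g (θ + h) + g (θ - h) - (g (θ + 0) + g (θ - 0))‖ := by
        simp only [secondDiff, add_zero, sub_zero, two_nsmul]
    _ ≤ 2 * M * h * ‖h - 0‖ := this
    _ = 2 * M * h ^ 2 := by rw [sub_zero, Real.norm_eq_abs, abs_of_nonneg hh]; ring

noncomputable def sqrtAbs (x : ℝ) : ℝ := |x| ^ (1 / 2 : ℝ)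

theorem sqrtAbs_neg (x : ℝ) : sqrtAbs (-x) = sqrtAbs x := by
  simp only [sqrtAbs, abs_neg]

theorem sqrtAbs_nonneg (x : ℝ) : 0 ≤ sqrtAbs x := Real.rpow_nonneg (abs_nonneg x) _

theorem continuous_sqrtAbs : Continuous sqrtAbs :=
  continuous_abs.rpow_const fun _ => Or.inr (by norm_num)

theorem sqrtAbs_le_one {x : ℝ} (hx : |x| ≤ 1) : sqrtAbs x ≤ 1 :=
  Real.rpow_le_one (abs_nonneg x) hx (by norm_num)

theorem sqrtAbs_le_sqrtAbs_add (x y : ℝ) : sqrtAbs y ≤ sqrtAbs x + sqrtAbs (y - x) :=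
  calc |y| ^ (1 / 2 : ℝ) ≤ (|x| + |y - x|) ^ (1 / 2 : ℝ) :=
        Real.rpow_le_rpow (abs_nonneg y) (by simpa using abs_add_le x (y - x)) (by norm_num)
    _ ≤ |x| ^ (1 / 2 : ℝ) + |y - x| ^ (1 / 2 : ℝ) :=
        Real.rpow_add_le_add_rpow (abs_nonneg x) (abs_nonneg _) (by norm_num) (by norm_num)

theorem abs_sqrtAbs_sub_le (x y : ℝ) : |sqrtAbs y - sqrtAbs x| ≤ sqrtAbs (y - x) := by
  refine abs_sub_le_iff.2 ⟨?_, ?_⟩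
  · linarith [sqrtAbs_le_sqrtAbs_add x y]
  · have := sqrtAbs_neg (y - x)
    rw [neg_sub] at this
    linarith [sqrtAbs_le_sqrtAbs_add y x]

theorem secondDiff_sqrtAbs_neg (h x : ℝ) :
    secondDiff sqrtAbs h (-x) = secondDiff sqrtAbs h x := by
  have hp : sqrtAbs (-x + h) = sqrtAbs (x - h) := by rw [← sqrtAbs_neg, neg_add, neg_neg]; ring_nf
  have hm : sqrtAbs (-x - h) = sqrtAbs (x + h) := by
    rw [← sqrtAbs_neg, neg_sub', sub_neg_eq_add, neg_neg]
  simp only [secondDiff, hp, hm, sqrtAbs_neg]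
  abel

theorem secondDiff_sqrtAbs_eq {h : ℝ} (hh : 0 < h) (x : ℝ) :
    secondDiff sqrtAbs h x = h ^ (1 / 2 : ℝ) * secondDiff sqrtAbs 1 (x / h) := by
  have hscale : ∀ y, sqrtAbs (h * y) = h ^ (1 / 2 : ℝ) * sqrtAbs y := fun y => by
    rw [sqrtAbs, sqrtAbs, abs_mul, abs_of_pos hh, Real.mul_rpow hh.le (abs_nonneg y)]
  obtain ⟨u, rfl⟩ : ∃ u, x = h * u := ⟨x / h, by field_simp⟩
  rw [mul_div_cancel_left₀ u hh.ne', secondDiff, secondDiff, show h * u + h = h * (u + 1) by ring,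
    show h * u - h = h * (u - 1) by ring, hscale, hscale, hscale]
  simp only [nsmul_eq_mul, Nat.cast_ofNat]
  ring

theorem hasDerivAt_sqrtAbs {y : ℝ} (hy : 0 < y) :
    HasDerivAt sqrtAbs (1 / 2 * y ^ (1 / 2 - 1 : ℝ)) y :=
  (Real.hasDerivAt_rpow_const (Or.inl hy.ne')).congr_of_eventuallyEq <|
    (lt_mem_nhds hy).mono fun z hz => by rw [sqrtAbs, abs_of_pos hz]

theorem abs_secondDiff_sqrtAbs_one_le {x : ℝ} (hx : 2 ≤ x) :
    |secondDiff sqrtAbs 1 x| ≤ (x / 2) ^ (-(3 / 2) : ℝ) / 2 := by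
  have hpos : ∀ y ∈ Icc (x - 1) (x + 1), x / 2 ≤ y := fun y hy => by linarith [hy.1]
  have := norm_secondDiff_le (g' := fun y => 1 / 2 * y ^ (1 / 2 - 1 : ℝ))
    (g'' := fun y => 1 / 2 * ((1 / 2 - 1) * y ^ (1 / 2 - 1 - 1 : ℝ)))
    (M := (x / 2) ^ (-(3 / 2) : ℝ) / 4)
    zero_le_one
    (fun y hy => hasDerivAt_sqrtAbs (by linarith [hpos y hy]))
    (fun y hy => (Real.hasDerivAt_rpow_const (Or.inl (by linarith [hpos y hy]))).const_mul _)
    (fun y hy => by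
      have hy0 : 0 < y := by linarith [hpos y hy]
      rw [Real.norm_eq_abs, show (1 / 2 - 1 - 1 : ℝ) = -(3 / 2) by norm_num, abs_mul, abs_mul,
        abs_of_pos (Real.rpow_pos_of_pos hy0 _)]
      have := Real.rpow_le_rpow_of_nonpos (by linarith) (hpos y hy) (by norm_num : -(3 / 2 : ℝ) ≤ 0)
      norm_num
      linarith)
  rw [← Real.norm_eq_abs]
  linarith

theorem integrable_secondDiff_sqrtAbs_one : Integrable (secondDiff sqrtAbs 1) := by
  refine (continuous_sqrtAbs.secondDiff 1).locallyIntegrable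
    |>.integrable_of_isBigO_atTop_of_norm_isNegInvariant
    (g := fun x : ℝ => x ^ (-(3 / 2) : ℝ))
    (Eventually.of_forall fun x => by simp [secondDiff_sqrtAbs_neg]) ?_
    ⟨Ioi 1, Ioi_mem_atTop 1, integrableOn_Ioi_rpow_of_lt (by norm_num) one_pos⟩
  refine Asymptotics.IsBigO.of_bound (1 / (2 * 2 ^ (-(3 / 2) : ℝ))) ?_
  filter_upwards [eventually_ge_atTop 2] with x hx
  rw [Real.norm_eq_abs, Real.norm_eq_abs, abs_of_pos (Real.rpow_pos_of_pos (by linarith) _)]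
  calc |secondDiff sqrtAbs 1 x| ≤ (x / 2) ^ (-(3 / 2) : ℝ) / 2 := abs_secondDiff_sqrtAbs_one_le hx
    _ = _ := by rw [Real.div_rpow (by linarith) zero_le_two]; field_simp

theorem integral_abs_secondDiff_sqrtAbs_le {a b h : ℝ} (hab : a ≤ b) (hh : 0 < h) (t : ℝ) :
    ∫ θ in a..b, |secondDiff sqrtAbs h (θ - t)| ≤
      (∫ x, |secondDiff sqrtAbs 1 x|) * h ^ (3 / 2 : ℝ) := by
  set G : ℝ → ℝ := fun x => h ^ (1 / 2 : ℝ) * |secondDiff sqrtAbs 1 (x / h)|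
  have hG : ∀ x, |secondDiff sqrtAbs h x| = G x := fun x => by
    rw [secondDiff_sqrtAbs_eq hh, abs_mul, abs_of_pos (Real.rpow_pos_of_pos hh _)]
  have hGint : Integrable G := (integrable_secondDiff_sqrtAbs_one.abs.comp_div hh.ne').const_mul _
  simp only [hG]
  rw [intervalIntegral.integral_comp_sub_right G t, intervalIntegral.integral_of_le (by linarith)]
  calc ∫ x in Ioc (a - t) (b - t), G x ≤ ∫ x, G x :=
        setIntegral_le_integral hGint (Eventually.of_forall fun x => by positivity)
    _ = _ := by
        rw [MeasureTheory.integral_const_mul,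
          Measure.integral_comp_div (fun x => |secondDiff sqrtAbs 1 x|),
          abs_of_pos hh, smul_eq_mul, show (3 / 2 : ℝ) = 1 / 2 + 1 by norm_num,
          Real.rpow_add hh, Real.rpow_one]
        ring

theorem IsCompact.exists_finset_eventually_forall_exists {X ι α : Type*} [TopologicalSpace X]
    {K : Set X} (hK : IsCompact K) {l : Filter α} {P : α → ι → X → Prop}
    (h : ∀ x ∈ K, ∃ i, ∃ U ∈ 𝓝 x, ∀ᶠ p in l, ∀ y ∈ U, P p i y) :
    ∃ T : Finset ι, ∀ᶠ p in l, ∀ y ∈ K, ∃ i ∈ T, P p i y := by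
  classical
  choose i U hU hP using h
  obtain ⟨F, hcover⟩ := hK.elim_nhds_subcover' U hU
  refine ⟨F.image fun x : K => i x x.2, ?_⟩
  filter_upwards [(eventually_all_finset F).2 fun x (_ : x ∈ F) => hP x x.2] with p hp y hy
  obtain ⟨x, hx, hyx⟩ := mem_iUnion₂.1 (hcover hy)
  exact ⟨i x x.2, Finset.mem_image_of_mem _ hx, hp x hx y hyx⟩

section Singularity

variable {E : Type*} [NormedAddCommGroup E] [NormedSpace ℝ E]

theorem norm_secondDiff_sqrtAbs_smul_le {b b' b'' : ℝ → E} {t θ h M : ℝ} (hh : 0 < h)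
    (hθ : |θ - t| ≤ 1)
    (hb : ∀ y ∈ Icc (θ - h) (θ + h), HasDerivAt b (b' y) y)
    (hb' : ∀ y ∈ Icc (θ - h) (θ + h), HasDerivAt b' (b'' y) y)
    (hM : ∀ y ∈ Icc (θ - h) (θ + h), ‖b y‖ ≤ M ∧ ‖b' y‖ ≤ M ∧ ‖b'' y‖ ≤ M) :
    ‖secondDiff (fun y => sqrtAbs (y - t) • b y) h θ‖ ≤
      M * |secondDiff sqrtAbs h (θ - t)| + 2 * M * h ^ (3 / 2 : ℝ) + 2 * M * h ^ 2 := by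
  have hθmem : θ ∈ Icc (θ - h) (θ + h) := ⟨by linarith, by linarith⟩
  have hM0 : 0 ≤ M := (norm_nonneg _).trans (hM θ hθmem).1
  have hψ : secondDiff (fun y => sqrtAbs (y - t)) h θ = secondDiff sqrtAbs h (θ - t) := by
    simp only [secondDiff, sub_right_comm, add_sub_right_comm]
  have hjump : ∀ s, |s| = h → |sqrtAbs (θ + s - t) - sqrtAbs (θ - t)| ≤ h ^ (1 / 2 : ℝ) :=
    fun s hs => by
      simpa [sqrtAbs, hs, add_sub_right_comm] using abs_sqrtAbs_sub_le (θ - t) (θ + s - t)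
  have hlip : ∀ s, |s| = h → ‖b (θ + s) - b θ‖ ≤ M * h := fun s hs => by
    have hmem : θ + s ∈ Icc (θ - h) (θ + h) := by
      constructor <;> linarith [neg_abs_le s, le_abs_self s]
    simpa [hs] using (convex_Icc _ _).norm_image_sub_le_of_norm_hasDerivWithin_le
      (fun y hy => (hb y hy).hasDerivWithinAt) (fun y hy => (hM y hy).2.1) hθmem hmem
  have hsd : ‖secondDiff b h θ‖ ≤ 2 * M * h ^ 2 :=
    norm_secondDiff_le hh.le hb hb' fun y hy => (hM y hy).2.2
  have hpow : h ^ (1 / 2 : ℝ) * h = h ^ (3 / 2 : ℝ) := by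
    rw [← Real.rpow_add_one hh.ne']; norm_num
  have hθh : θ - h = θ + -h := sub_eq_add_neg θ h
  rw [secondDiff_smul, hψ]
  calc _ ≤ ‖secondDiff sqrtAbs h (θ - t) • b θ‖
        + ‖(sqrtAbs (θ + h - t) - sqrtAbs (θ - t)) • (b (θ + h) - b θ)‖
        + ‖(sqrtAbs (θ + -h - t) - sqrtAbs (θ - t)) • (b (θ + -h) - b θ)‖
        + ‖sqrtAbs (θ - t) • secondDiff b h θ‖ := by rw [← hθh]; exact norm_add₄_le
    _ ≤ |secondDiff sqrtAbs h (θ - t)| * M + h ^ (1 / 2 : ℝ) * (M * h)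
        + h ^ (1 / 2 : ℝ) * (M * h) + 1 * (2 * M * h ^ 2) := by
      simp only [norm_smul, Real.norm_eq_abs, abs_of_nonneg (sqrtAbs_nonneg _)]
      gcongr
      · exact (hM θ hθmem).1
      · exact hjump h (abs_of_pos hh)
      · exact hlip h (abs_of_pos hh)
      · exact hjump (-h) (by rw [abs_neg, abs_of_pos hh])
      · exact hlip (-h) (by rw [abs_neg, abs_of_pos hh])
      · exact sqrtAbs_le_one hθ
    _ = _ := by rw [← hpow]; ring

def HasSqrtSingularityAt (f : ℝ → E) (x : ℝ) : Prop :=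
  ∃ a b : ℝ → E, AnalyticAt ℝ a x ∧ AnalyticAt ℝ b x ∧
    ∀ᶠ y in 𝓝 x, f y = a y + sqrtAbs (y - x) • b y

theorem AnalyticAt.hasSqrtSingularityAt {f : ℝ → E} {x : ℝ} (hf : AnalyticAt ℝ f x) :
    HasSqrtSingularityAt f x :=
  ⟨f, 0, hf, analyticAt_const, Eventually.of_forall fun y => by simp⟩

theorem HasSqrtSingularityAt.add_period {f : ℝ → E} {x c : ℝ} (hf : HasSqrtSingularityAt f x)
    (hc : Function.Periodic f c) :
    HasSqrtSingularityAt f (x + c) := by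
  obtain ⟨a, b, ha, hb, hrep⟩ := hf
  have hshift : AnalyticAt ℝ (fun y : ℝ => y - c) (x + c) := analyticAt_id.sub analyticAt_const
  have htend : Tendsto (fun y : ℝ => y - c) (𝓝 (x + c)) (𝓝 x) := by
    simpa using (continuous_sub_right c).tendsto (x + c)
  refine ⟨fun y => a (y - c), fun y => b (y - c), ha.comp_of_eq hshift (add_sub_cancel_right x c),
    hb.comp_of_eq hshift (add_sub_cancel_right x c), ?_⟩
  filter_upwards [htend.eventually hrep] with y hy
  have hfy := hc (y - c)
  rw [sub_add_cancel] at hfy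
  rw [hfy, hy, sub_sub, add_comm c x]

variable [CompleteSpace E]

theorem AnalyticAt.exists_eventually_norm_deriv_le {g : ℝ → E} {x : ℝ} (hg : AnalyticAt ℝ g x) :
    ∃ M, ∀ᶠ y in 𝓝 x,
      AnalyticAt ℝ g y ∧ ‖g y‖ ≤ M ∧ ‖deriv g y‖ ≤ M ∧ ‖deriv (deriv g) y‖ ≤ M := by
  set M := ‖g x‖ + ‖deriv g x‖ + ‖deriv (deriv g) x‖ + 1
  have hbound : ∀ u : ℝ → E, ContinuousAt u x → ‖u x‖ + 1 ≤ M → ∀ᶠ y in 𝓝 x, ‖u y‖ ≤ M :=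
    fun u hu hM => (hu.norm.eventually_lt continuousAt_const (lt_add_one _)).mono
      fun y hy => hy.le.trans hM
  refine ⟨M, hg.eventually_analyticAt.and <|
    (hbound g hg.continuousAt ?_).and <| (hbound _ hg.deriv.continuousAt ?_).and
      (hbound _ hg.deriv.deriv.continuousAt ?_)⟩ <;>
  · simp only [M]
    linarith [norm_nonneg (g x), norm_nonneg (deriv g x), norm_nonneg (deriv (deriv g) x)]

theorem norm_secondDiff_add_sqrtAbs_smul_le {a b : ℝ → E} {t θ h Ma Mb : ℝ} (hh : 0 < h)
    (hh1 : h ≤ 1) (hθ : |θ - t| ≤ 1)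
    (ha : ∀ y ∈ Icc (θ - h) (θ + h), AnalyticAt ℝ a y ∧ ‖deriv (deriv a) y‖ ≤ Ma)
    (hb : ∀ y ∈ Icc (θ - h) (θ + h),
      AnalyticAt ℝ b y ∧ ‖b y‖ ≤ Mb ∧ ‖deriv b y‖ ≤ Mb ∧ ‖deriv (deriv b) y‖ ≤ Mb) :
    ‖secondDiff (fun y => a y + sqrtAbs (y - t) • b y) h θ‖ ≤
      (2 * Ma + 4 * Mb) * h ^ (3 / 2 : ℝ) + Mb * |secondDiff sqrtAbs h (θ - t)| := by
  have hθI : θ ∈ Icc (θ - h) (θ + h) := ⟨by linarith, by linarith⟩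
  have hsa : ‖secondDiff a h θ‖ ≤ 2 * Ma * h ^ 2 :=
    norm_secondDiff_le hh.le (fun y hy => (ha y hy).1.differentiableAt.hasDerivAt)
      (fun y hy => (ha y hy).1.deriv.differentiableAt.hasDerivAt) fun y hy => (ha y hy).2
  have hsb := norm_secondDiff_sqrtAbs_smul_le hh hθ
    (fun y hy => (hb y hy).1.differentiableAt.hasDerivAt)
    (fun y hy => (hb y hy).1.deriv.differentiableAt.hasDerivAt) fun y hy => (hb y hy).2
  have hMa0 : 0 ≤ Ma := (norm_nonneg _).trans (ha θ hθI).2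
  have hMb0 : 0 ≤ Mb := (norm_nonneg _).trans (hb θ hθI).2.1
  have hsq : h ^ 2 ≤ h ^ (3 / 2 : ℝ) := by
    rw [← Real.rpow_natCast]
    exact Real.rpow_le_rpow_of_exponent_ge hh hh1 (by norm_num)
  rw [secondDiff_add]
  nlinarith [norm_add_le (secondDiff a h θ) (secondDiff (fun y => sqrtAbs (y - t) • b y) h θ),
    mul_le_mul_of_nonneg_left hsq hMa0, mul_le_mul_of_nonneg_left hsq hMb0]

/-- Here `p = (M, h)`: the estimate holds for every large constant `M` and every small step `h`. -/
theorem HasSqrtSingularityAt.exists_nhds_eventually_norm_secondDiff_le {f : ℝ → E} {t : ℝ}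
    (hf : HasSqrtSingularityAt f t) :
    ∃ U ∈ 𝓝 t, ∀ᶠ p : ℝ × ℝ in atTop ×ˢ 𝓝[>] 0, ∀ θ ∈ U,
      ‖secondDiff f p.2 θ‖ ≤ p.1 * (p.2 ^ (3 / 2 : ℝ) + |secondDiff sqrtAbs p.2 (θ - t)|) := by
  obtain ⟨a, b, ha, hb, hrep⟩ := hf
  obtain ⟨Ma, hMa⟩ := ha.exists_eventually_norm_deriv_le
  obtain ⟨Mb, hMb⟩ := hb.exists_eventually_norm_deriv_le
  obtain ⟨r, hr, hball⟩ := Metric.eventually_nhds_iff_ball.1 ((hMa.and hMb).and hrep)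
  obtain ⟨ρ, hρ, hρr, hρ1⟩ : ∃ ρ > 0, 2 * ρ ≤ r ∧ 2 * ρ ≤ 1 :=
    ⟨min r 1 / 2, by positivity, by linarith [min_le_left r 1], by linarith [min_le_right r 1]⟩
  refine ⟨ball t ρ, ball_mem_nhds t hρ, ?_⟩
  filter_upwards [(eventually_ge_atTop (2 * |Ma| + 4 * |Mb|)).prod_mk (Ioo_mem_nhdsGT hρ)]
    with ⟨M, h⟩ ⟨hM, hh0, hhρ⟩ θ hθ
  dsimp only at hM hh0 hhρ ⊢
  rw [mem_ball, Real.dist_eq, abs_lt] at hθ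
  have hI : ∀ y ∈ Icc (θ - h) (θ + h), y ∈ ball t r := fun y hy => by
    rw [mem_ball, Real.dist_eq, abs_lt]
    constructor <;> linarith [hy.1, hy.2]
  have hfθ : secondDiff f h θ = secondDiff (fun y => a y + sqrtAbs (y - t) • b y) h θ := by
    simp only [secondDiff, (hball _ (hI _ ⟨by linarith, le_rfl⟩)).2,
      (hball _ (hI _ ⟨le_rfl, by linarith⟩)).2, (hball _ (hI θ ⟨by linarith, by linarith⟩)).2]
  rw [hfθ]
  refine (norm_secondDiff_add_sqrtAbs_smul_le hh0 (by linarith)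
    (abs_le.2 ⟨by linarith, by linarith⟩)
    (fun y hy => ⟨(hball y (hI y hy)).1.1.1, (hball y (hI y hy)).1.1.2.2.2⟩)
    (fun y hy => (hball y (hI y hy)).1.2)).trans ?_
  nlinarith [Real.rpow_nonneg hh0.le (3 / 2 : ℝ), abs_nonneg (secondDiff sqrtAbs h (θ - t)),
    le_abs_self Ma, le_abs_self Mb, abs_nonneg Ma, abs_nonneg Mb]

theorem exists_eventually_integral_norm_secondDiff_le {f : ℝ → E} (hf : Continuous f) {a b : ℝ}
    (hab : a ≤ b)
    (hsing : ∀ x ∈ Icc a b, HasSqrtSingularityAt f x) :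
    ∃ C, ∀ᶠ h in 𝓝[>] 0, ∫ θ in a..b, ‖secondDiff f h θ‖ ≤ C * h ^ (3 / 2 : ℝ) := by
  obtain ⟨T, hT⟩ := isCompact_Icc.exists_finset_eventually_forall_exists fun x hx =>
    ⟨x, (hsing x hx).exists_nhds_eventually_norm_secondDiff_le⟩
  obtain ⟨M, hM0, hM⟩ := ((eventually_ge_atTop 0).and hT.curry).exists
  refine ⟨M * (b - a + T.card * ∫ x, |secondDiff sqrtAbs 1 x|), ?_⟩
  filter_upwards [hM, self_mem_nhdsWithin] with h hbound (hh : 0 < h)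
  have hψ : ∀ t, Continuous fun θ => |secondDiff sqrtAbs h (θ - t)| := fun t =>
    ((continuous_sqrtAbs.secondDiff h).comp (continuous_sub_right t)).abs
  have hpt : ∀ θ ∈ Icc a b, ‖secondDiff f h θ‖ ≤
      M * (h ^ (3 / 2 : ℝ) + ∑ t ∈ T, |secondDiff sqrtAbs h (θ - t)|) := fun θ hθ => by
    obtain ⟨t, ht, hle⟩ := hbound θ hθ
    refine hle.trans ?_
    gcongr
    exact Finset.single_le_sum (fun t _ => abs_nonneg (secondDiff sqrtAbs h (θ - t))) ht
  calc ∫ θ in a..b, ‖secondDiff f h θ‖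
      ≤ ∫ θ in a..b, M * (h ^ (3 / 2 : ℝ) + ∑ t ∈ T, |secondDiff sqrtAbs h (θ - t)|) :=
        integral_mono_on hab ((hf.secondDiff h).norm.intervalIntegrable _ _)
          ((continuous_const.mul (continuous_const.add
            (continuous_finsetSum _ fun t _ => hψ t))).intervalIntegrable _ _) hpt
    _ = M * ((b - a) * h ^ (3 / 2 : ℝ) +
          ∑ t ∈ T, ∫ θ in a..b, |secondDiff sqrtAbs h (θ - t)|) := by
        rw [intervalIntegral.integral_const_mul,
          intervalIntegral.integral_add intervalIntegrable_const
          ((continuous_finsetSum _ fun t _ => hψ t).intervalIntegrable _ _),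
          intervalIntegral.integral_finsetSum fun t _ => (hψ t).intervalIntegrable _ _,
          intervalIntegral.integral_const, smul_eq_mul]
    _ ≤ M * ((b - a) * h ^ (3 / 2 : ℝ) +
          ∑ t ∈ T, (∫ x, |secondDiff sqrtAbs 1 x|) * h ^ (3 / 2 : ℝ)) := by
        gcongr with t
        exact integral_abs_secondDiff_sqrtAbs_le hab hh t
    _ = M * (b - a + T.card * ∫ x, |secondDiff sqrtAbs 1 x|) * h ^ (3 / 2 : ℝ) := by
        rw [Finset.sum_const, nsmul_eq_mul]
        ring

end Singularity

open Complex in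
theorem integral_secondDiff_mul_exp {f : ℝ → ℂ} (hf : Continuous f)
    (hper : Function.Periodic f (2 * π)) {k : ℤ} (hk : k ≠ 0) :
    ∫ θ in (0 : ℝ)..(2 * π), secondDiff f (π / k) θ * exp (-I * k * θ) =
      -4 * ∫ θ in (0 : ℝ)..(2 * π), f θ * exp (-I * k * θ) := by
  set e : ℝ → ℂ := fun θ => exp (-I * k * θ)
  have hk' : (k : ℂ) ≠ 0 := Int.cast_ne_zero.2 hk
  have he_add : ∀ θ, e (θ + π / k) = -e θ := fun θ => by
    simp only [e, show -I * k * ((θ + π / k : ℝ) : ℂ) = -I * k * θ - π * I by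
      push_cast; field_simp; ring,
      Complex.exp_sub, exp_pi_mul_I, div_neg, div_one]
  have he_sub : ∀ θ, e (θ - π / k) = -e θ := fun θ => by
    simp only [e, show -I * k * ((θ - π / k : ℝ) : ℂ) = -I * k * θ + π * I by
      push_cast; field_simp; ring,
      Complex.exp_add, exp_pi_mul_I, mul_neg_one]
  have he_per : Function.Periodic e (2 * π) := fun θ => by
    simp only [e, show -I * k * ((θ + 2 * π : ℝ) : ℂ) = -I * k * θ + (-k : ℤ) * (2 * π * I) by
      push_cast; ring, Complex.exp_add, exp_int_mul_two_pi_mul_I, mul_one]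
  have hF : Continuous fun θ => f θ * e θ := hf.mul (by fun_prop)
  have hshift : ∀ s, ∫ θ in (0 : ℝ)..(2 * π), f (θ + s) * e (θ + s) =
      ∫ θ in (0 : ℝ)..(2 * π), f θ * e θ := fun s => by
    rw [intervalIntegral.integral_comp_add_right (fun θ => f θ * e θ)]
    simpa [add_comm] using (hper.mul he_per).intervalIntegral_add_eq s 0
  have hpt : ∀ θ, secondDiff f (π / k) θ * e θ = -(f (θ + π / k) * e (θ + π / k) +
      f (θ + -(π / k)) * e (θ + -(π / k)) + 2 * (f θ * e θ)) := fun θ => by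
    rw [← sub_eq_add_neg, he_add, he_sub, secondDiff, two_nsmul]; ring
  change ∫ θ in (0 : ℝ)..(2 * π), secondDiff f (π / k) θ * e θ =
    -4 * ∫ θ in (0 : ℝ)..(2 * π), f θ * e θ
  have hint : ∀ s, IntervalIntegrable (fun θ => f (θ + s) * e (θ + s)) volume 0 (2 * π) :=
    fun s => (hF.comp (continuous_add_const s)).intervalIntegrable _ _
  simp only [hpt]
  rw [intervalIntegral.integral_neg, intervalIntegral.integral_add ((hint _).add (hint _))
      ((hF.intervalIntegrable 0 (2 * π)).const_mul 2),
    intervalIntegral.integral_add (hint _) (hint _), intervalIntegral.integral_const_mul,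
    hshift, hshift]
  ring

open Complex in
theorem norm_fourierCoeff_le_integral_norm_secondDiff {f : ℝ → ℂ} (hf : Continuous f)
    (hper : Function.Periodic f (2 * π)) {k : ℤ} (hk : k ≠ 0) :
    ‖(1 / (2 * π) : ℂ) * ∫ θ in (0 : ℝ)..(2 * π), f θ * exp (-I * k * θ)‖ ≤
      (8 * π)⁻¹ * ∫ θ in (0 : ℝ)..(2 * π), ‖secondDiff f |π / k| θ‖ := by
  have hnorm : ‖∫ θ in (0 : ℝ)..(2 * π), secondDiff f (π / k) θ * exp (-I * k * θ)‖ ≤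
      ∫ θ in (0 : ℝ)..(2 * π), ‖secondDiff f |π / k| θ‖ := by
    refine (intervalIntegral.norm_integral_le_integral_norm (by positivity)).trans_eq ?_
    refine intervalIntegral.integral_congr fun θ _ => ?_
    simp [secondDiff_abs, Complex.norm_exp]
  have hcoef : ‖(1 / (2 * π) : ℂ)‖ = (2 * π)⁻¹ := by
    rw [one_div, norm_inv, show (2 * π : ℂ) = ((2 * π : ℝ) : ℂ) by push_cast; ring, norm_real,
      Real.norm_eq_abs, abs_of_pos (by positivity)]
  have hI : ∫ θ in (0 : ℝ)..(2 * π), f θ * exp (-I * k * θ) =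
      -(1 / 4) * ∫ θ in (0 : ℝ)..(2 * π), secondDiff f (π / k) θ * exp (-I * k * θ) := by
    rw [integral_secondDiff_mul_exp hf hper hk]; ring
  rw [norm_mul, hcoef, hI, norm_mul]
  have hquarter : ‖-(1 / 4 : ℂ)‖ = 1 / 4 := by norm_num
  rw [hquarter, show (8 * π)⁻¹ = (2 * π)⁻¹ * (1 / 4) by ring, mul_assoc]
  gcongr

theorem tendsto_abs_pi_div_intCast : Tendsto (fun k : ℤ => |π / k|) cofinite (𝓝[>] 0) := by
  refine tendsto_nhdsWithin_iff.2 ⟨?_, (eventually_cofinite_ne 0).mono fun k hk =>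
    abs_pos.2 (div_ne_zero pi_ne_zero (Int.cast_ne_zero.2 hk))⟩
  have habs : Tendsto (fun k : ℤ => |(k : ℝ)|) cofinite atTop :=
    tendsto_norm_cocompact_atTop.comp Int.tendsto_coe_cofinite
  simpa [abs_div, abs_of_pos pi_pos, div_eq_mul_inv] using habs.inv_tendsto_atTop.const_mul π

theorem Asymptotics.IsBigO.exists_forall_norm_le {α F : Type*} [NormedAddCommGroup F]
    {u : α → F} {g : α → ℝ} {s : Set α} (h : u =O[cofinite] g) (hg : ∀ x ∈ s, 0 < g x) :
    ∃ C, ∀ x ∈ s, ‖u x‖ ≤ C * g x := by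
  have hs : (u ∘ (↑) : s → F) =O[cofinite] (g ∘ (↑)) :=
    h.comp_tendsto Subtype.val_injective.tendsto_cofinite
  obtain ⟨C, hC⟩ := (isBigO_cofinite_iff fun x hx => absurd hx (hg x.1 x.2).ne').1 hs
  exact ⟨C, fun x hx => by simpa [abs_of_pos (hg x hx)] using hC ⟨x, hx⟩⟩

theorem isBigO_fourierCoeff_of_hasSqrtSingularityAt {f : ℝ → ℂ} (hf : Continuous f)
    (hper : Function.Periodic f (2 * π)) (hsing : ∀ x ∈ Icc 0 (2 * π), HasSqrtSingularityAt f x) :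
    (fun k : ℤ => (1 / (2 * π) : ℂ) *
      ∫ θ in (0 : ℝ)..(2 * π), f θ * Complex.exp (-Complex.I * k * θ)) =O[cofinite]
        fun k : ℤ => |(k : ℝ)| ^ (-(3 / 2) : ℝ) := by
  obtain ⟨C, hC⟩ := exists_eventually_integral_norm_secondDiff_le hf (by positivity) hsing
  refine Asymptotics.IsBigO.of_bound ((8 * π)⁻¹ * C * π ^ (3 / 2 : ℝ)) ?_
  filter_upwards [tendsto_abs_pi_div_intCast.eventually hC, eventually_cofinite_ne 0] with k hk hk0
  have hpow : |π / k| ^ (3 / 2 : ℝ) = π ^ (3 / 2 : ℝ) * |(k : ℝ)| ^ (-(3 / 2) : ℝ) := by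
    rw [abs_div, abs_of_pos pi_pos, Real.div_rpow pi_pos.le (abs_nonneg _),
      Real.rpow_neg (abs_nonneg _), div_eq_mul_inv]
  calc _ ≤ (8 * π)⁻¹ * ∫ θ in (0 : ℝ)..(2 * π), ‖secondDiff f |π / k| θ‖ :=
        norm_fourierCoeff_le_integral_norm_secondDiff hf hper hk0
    _ ≤ (8 * π)⁻¹ * (C * |π / k| ^ (3 / 2 : ℝ)) := by gcongr
    _ = _ := by
        rw [Real.norm_eq_abs, abs_of_nonneg (Real.rpow_nonneg (abs_nonneg _) _), hpow]
        ring

theorem stmt_19 (f : ℝ → ℂ) (hcont : Continuous f)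
    (hper : ∀ θ : ℝ, f (θ + 2 * π) = f θ)
    (S : Finset ℝ)
    (hA : ∀ θ : ℝ, (¬ ∃ s ∈ S, ∃ n : ℤ, θ = s + 2 * π * n) → AnalyticAt ℝ f θ)
    (hS : ∀ s ∈ S, ∃ ε > 0, ∃ a b : ℝ → ℂ,
      (∀ θ ∈ ball s ε, AnalyticAt ℝ a θ) ∧
      (∀ θ ∈ ball s ε, AnalyticAt ℝ b θ) ∧
      ∀ θ ∈ ball s ε, f θ = a θ + (|θ - s| ^ ((1:ℝ)/2) : ℝ) * b θ) :
    ∃ C : ℝ, ∀ k : ℤ, k ≠ 0 →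
      ‖(1 / (2 * π) : ℂ) *
          ∫ θ in (0:ℝ)..(2 * π), f θ * Complex.exp (-Complex.I * k * θ)‖ ≤
        C * |(k : ℝ)| ^ (-(3/2) : ℝ) := by
  have hsing : ∀ x, HasSqrtSingularityAt f x := by
    intro x
    by_cases hx : ∃ s ∈ S, ∃ n : ℤ, x = s + 2 * π * n
    · obtain ⟨s, hs, n, rfl⟩ := hx
      obtain ⟨ε, hε, a, b, ha, hb, hrep⟩ := hS s hs
      have hs' : HasSqrtSingularityAt f s :=
        ⟨a, b, ha s (mem_ball_self hε), hb s (mem_ball_self hε), eventually_of_mem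
          (ball_mem_nhds s hε) fun θ hθ => by rw [hrep θ hθ, sqrtAbs, Complex.real_smul]⟩
      simpa [mul_comm] using hs'.add_period (Function.Periodic.int_mul hper n)
    · exact (hA x hx).hasSqrtSingularityAt
  exact (isBigO_fourierCoeff_of_hasSqrtSingularityAt hcont hper fun x _ => hsing x)
    |>.exists_forall_norm_le fun k hk => Real.rpow_pos_of_pos (abs_pos.2 (Int.cast_ne_zero.2 hk)) _
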